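/- Let $E$ be a symmetric trace-free $n \times n$ real matrix ($n \ge 2$) with $E \ne 0$. Then equality $\operatorname{tr}(E^3) = -\frac{n-2}{\sqrt{n(n-1)}} (\operatorname{tr}(E^2))^{3/2}$ holds if and only if $E$ has eigenvalue $\lambda$ with multiplicity $n-1$ and eigenvalue $-(n-1)\lambda$ with multiplicity $1$, for some $\lambda > 0$. -/

import Mathlib

/-! Let `xᵢ` be the eigenvalues, so `∑ xᵢ = 0`, and put `s = ∑ xᵢ²`, `c = √(s / (n(n-1)))`.
Cauchy–Schwarz applied to the other `n - 1` eigenvalues gives `xᵢ ≥ -(n-1)c`, so every term of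
`∑ (xᵢ + (n-1)c)(xᵢ - c)² = tr E³ + (n-2)cs` is nonnegative. Hence equality in
`tr E³ ≥ -(n-2)cs` means that each `xᵢ` is `-(n-1)c` or `c`, and `∑ xᵢ = 0` then forces exactly
one of them to be `-(n-1)c`. -/

open Finset

lemma Matrix.IsHermitian.trace_pow {𝕜 n : Type*} [RCLike 𝕜] [Fintype n] [DecidableEq n]
    {A : Matrix n n 𝕜} (hA : A.IsHermitian) (k : ℕ) :
    (A ^ k).trace = ∑ i, (hA.eigenvalues i : 𝕜) ^ k := by
  conv_lhs => rw [hA.spectral_theorem, ← map_pow, Unitary.conjStarAlgAut_apply, trace_mul_cycle,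
    Unitary.coe_star_mul_self, one_mul, diagonal_pow, trace_diagonal]
  simp

lemma Real.rpow_three_halves_div_sqrt {s : ℝ} (hs : 0 ≤ s) (t : ℝ) :
    s ^ ((3 : ℝ) / 2) / √t = √(s / t) * s := by
  rw [Real.sqrt_div hs, show (3 : ℝ) / 2 = 1 + 1 / 2 by norm_num, Real.rpow_add' hs (by norm_num),
    Real.rpow_one, ← Real.sqrt_eq_rpow]
  ring

section

variable {ι : Type*} [Fintype ι] {x : ι → ℝ}

local notation "N" => (Fintype.card ι : ℝ)

lemma card_mul_sq_le_of_sum_eq_zero (hx : ∑ j, x j = 0) (i : ι) :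
    N * x i ^ 2 ≤ (N - 1) * ∑ j, x j ^ 2 := by
  classical
  have hsum : ∑ j ∈ univ.erase i, x j = -x i := by
    linarith [add_sum_erase univ x (mem_univ i)]
  have hsq : ∑ j ∈ univ.erase i, x j ^ 2 = ∑ j, x j ^ 2 - x i ^ 2 := by
    linarith [add_sum_erase univ (fun j => x j ^ 2) (mem_univ i)]
  have hcard : ((univ.erase i).card : ℝ) = N - 1 := by
    rw [card_erase_of_mem (mem_univ i), Nat.cast_sub (card_pos.2 ⟨i, mem_univ i⟩), card_univ,
      Nat.cast_one]
  have hcs := sq_sum_le_card_mul_sum_sq (s := univ.erase i) (f := x)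
  rw [hsum, hsq, hcard] at hcs
  linear_combination hcs

lemma neg_mul_le_of_sum_eq_zero {c : ℝ} (hx : ∑ j, x j = 0) (hc : 0 ≤ c)
    (hs : ∑ j, x j ^ 2 = N * (N - 1) * c ^ 2) (i : ι) : -(N - 1) * c ≤ x i := by
  have hN : 1 ≤ N := by exact_mod_cast Fintype.card_pos_iff.2 ⟨i⟩
  have h := card_mul_sq_le_of_sum_eq_zero hx i
  rw [hs] at h
  have hsq : x i ^ 2 ≤ ((N - 1) * c) ^ 2 := by nlinarith
  linarith [(abs_le_of_sq_le_sq' hsq (by positivity)).1]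

lemma sum_add_mul_mul_sub_sq_eq (hx : ∑ j, x j = 0) (c : ℝ) :
    ∑ i, (x i + (N - 1) * c) * (x i - c) ^ 2 =
      ∑ i, x i ^ 3 + (N - 3) * c * ∑ i, x i ^ 2 + N * (N - 1) * c ^ 3 := by
  have h : ∀ i, (x i + (N - 1) * c) * (x i - c) ^ 2 =
      x i ^ 3 + (N - 3) * c * x i ^ 2 + (3 - 2 * N) * c ^ 2 * x i + (N - 1) * c ^ 3 :=
    fun i => by ring
  simp only [h, sum_add_distrib, ← mul_sum, hx, sum_const, card_univ, nsmul_eq_mul]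
  ring

lemma sum_cube_eq_iff_forall_eq_or_eq {c : ℝ} (hx : ∑ j, x j = 0) (hc : 0 ≤ c)
    (hs : ∑ j, x j ^ 2 = N * (N - 1) * c ^ 2) :
    ∑ i, x i ^ 3 = -((N - 2) * c * ∑ i, x i ^ 2) ↔ ∀ i, x i = -(N - 1) * c ∨ x i = c := by
  have key : ∑ i, (x i + (N - 1) * c) * (x i - c) ^ 2 =
      ∑ i, x i ^ 3 + (N - 2) * c * ∑ i, x i ^ 2 := by
    rw [sum_add_mul_mul_sub_sq_eq hx]
    linear_combination (-c) * hs
  have hnonneg : ∀ i ∈ univ, 0 ≤ (x i + (N - 1) * c) * (x i - c) ^ 2 := fun i _ =>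
    mul_nonneg (by linarith [neg_mul_le_of_sum_eq_zero hx hc hs i]) (sq_nonneg _)
  rw [← add_eq_zero_iff_eq_neg, ← key, sum_eq_zero_iff_of_nonneg hnonneg]
  simp only [mem_univ, true_implies, mul_eq_zero, pow_eq_zero_iff two_ne_zero,
    add_eq_zero_iff_eq_neg, sub_eq_zero, neg_mul]

lemma exists_eq_forall_ne_of_forall_eq_or_eq [Nonempty ι] {c : ℝ} (hx : ∑ j, x j = 0)
    (hc : c ≠ 0) (h : ∀ i, x i = -(N - 1) * c ∨ x i = c) :
    ∃ i, x i = -(N - 1) * c ∧ ∀ j ≠ i, x j = c := by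
  classical
  set A := univ.filter fun i => x i - c ≠ 0
  have hA : A.card * -(N * c) = -(N * c) := by
    calc A.card * -(N * c) = ∑ i ∈ A, (x i - c) := by
          rw [← nsmul_eq_mul, ← sum_const]
          refine sum_congr rfl fun i hi => ?_
          rcases h i with h | h
          · rw [h]; ring
          · exact absurd (sub_eq_zero.2 h) (mem_filter.1 hi).2
      _ = ∑ i, (x i - c) := sum_filter_ne_zero _
      _ = -(N * c) := by rw [sum_sub_distrib, hx, sum_const, card_univ, nsmul_eq_mul]; ring
  have hNc : -(N * c) ≠ 0 := neg_ne_zero.2 (mul_ne_zero (by positivity) hc)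
  obtain ⟨i, hi⟩ := card_eq_one.1 (by exact_mod_cast (mul_eq_right₀ hNc).1 hA : A.card = 1)
  refine ⟨i, (h i).resolve_right fun h' => ?_, fun j hj => ?_⟩
  · have hiA : i ∈ A := by rw [hi]; exact mem_singleton_self i
    exact (mem_filter.1 hiA).2 (sub_eq_zero.2 h')
  · have hjA : j ∉ A := by rw [hi]; exact notMem_singleton.2 hj
    simpa [A, sub_eq_zero] using hjA

lemma sum_sq_eq_of_eq_of_forall_ne {l : ℝ} {i : ι} (hi : x i = -(N - 1) * l)
    (h : ∀ j ≠ i, x j = l) : ∑ j, x j ^ 2 = N * (N - 1) * l ^ 2 := by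
  classical
  rw [← add_sum_erase _ _ (mem_univ i), sum_congr rfl fun j hj => by rw [h j (ne_of_mem_erase hj)],
    sum_const, card_erase_of_mem (mem_univ i), nsmul_eq_mul,
    Nat.cast_sub (card_pos.2 ⟨i, mem_univ i⟩), card_univ, Nat.cast_one, hi]
  ring

theorem sum_cube_eq_lower_bound_iff (hN : 2 ≤ Fintype.card ι) (hx : ∑ j, x j = 0)
    (hs : 0 < ∑ j, x j ^ 2) :
    ∑ j, x j ^ 3 = -((N - 2) / √(N * (N - 1))) * (∑ j, x j ^ 2) ^ ((3 : ℝ) / 2) ↔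
      ∃ l : ℝ, 0 < l ∧ ∃ i, x i = -(N - 1) * l ∧ ∀ j ≠ i, x j = l := by
  have hN' : 0 < N * (N - 1) := by
    have : (2 : ℝ) ≤ N := by exact_mod_cast hN
    nlinarith
  have : Nonempty ι := Fintype.card_pos_iff.1 (by omega)
  set c := √((∑ j, x j ^ 2) / (N * (N - 1)))
  have hc : 0 < c := Real.sqrt_pos.2 (div_pos hs hN')
  have hsc : ∑ j, x j ^ 2 = N * (N - 1) * c ^ 2 := by
    rw [Real.sq_sqrt (div_nonneg hs.le hN'.le), mul_div_cancel₀ _ hN'.ne']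
  have hbound : -((N - 2) / √(N * (N - 1))) * (∑ j, x j ^ 2) ^ ((3 : ℝ) / 2) =
      -((N - 2) * c * ∑ j, x j ^ 2) := by
    rw [neg_mul, div_mul_comm, Real.rpow_three_halves_div_sqrt hs.le]
    ring
  rw [hbound, sum_cube_eq_iff_forall_eq_or_eq hx hc.le hsc]
  constructor
  · exact fun h => ⟨c, hc, exists_eq_forall_ne_of_forall_eq_or_eq hx hc.ne' h⟩
  · rintro ⟨l, hl, i, hi, hj⟩
    have hlc : l = c := by
      have h := (sum_sq_eq_of_eq_of_forall_ne hi hj).symm.trans hsc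
      exact (pow_left_inj₀ hl.le hc.le two_ne_zero).1 (mul_left_cancel₀ hN'.ne' h)
    subst hlc
    intro j
    by_cases hji : j = i
    · exact .inl (hji ▸ hi)
    · exact .inr (hj j hji)
end

/-- For a nonzero symmetric trace-free `n × n` real matrix `E` (`n ≥ 2`),
equality `tr(E³) = -((n-2)/√(n(n-1))) (tr(E²))^{3/2}` holds iff `E` has eigenvalue `λ` of
multiplicity `n-1` and eigenvalue `-(n-1)λ` of multiplicity `1`, for some `λ > 0`. -/
theorem cubic_trace_equality_case (n : ℕ) (hn : 2 ≤ n)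
    (E : Matrix (Fin n) (Fin n) ℝ) (hE : E.IsHermitian) (htr : E.trace = 0)
    (hne : E ≠ 0) :
    (E ^ 3).trace =
        -((n - 2 : ℝ) / Real.sqrt (n * (n - 1))) * ((E ^ 2).trace) ^ ((3 : ℝ) / 2) ↔
      ∃ l : ℝ, 0 < l ∧ ∃ i : Fin n,
        hE.eigenvalues i = -(n - 1 : ℝ) * l ∧ ∀ j : Fin n, j ≠ i → hE.eigenvalues j = l := by
  have hsum : ∑ i, hE.eigenvalues i = 0 := by
    simpa [htr] using (hE.trace_pow 1).symm
  have hsq : 0 < ∑ i, hE.eigenvalues i ^ 2 := by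
    obtain ⟨i, hi⟩ := Function.ne_iff.1 (mt hE.eigenvalues_eq_zero_iff.1 hne)
    exact sum_pos' (fun j _ => sq_nonneg _) ⟨i, mem_univ i, sq_pos_of_ne_zero hi⟩
  simpa only [Fintype.card_fin, hE.trace_pow, RCLike.ofReal_real_eq_id, id] using
    sum_cube_eq_lower_bound_iff (ι := Fin n) (by simpa using hn) hsum hsq
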